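/- (Proximal gradient potential decrease, exact, μ = 0) Let f: ℝ^d → ℝ be convex L-smooth, g proper closed convex, F = f + g with minimizer x_⋆, and 0 < λ ≤ 1/L. Let A ≥ 0 and A⁺ = A + (λ + √(λ² + 4λA))/2, so that A⁺ satisfies A⁺(A⁺ - λ) - A(2A⁺ - A) = 0. Given x, z ∈ ℝ^d, set y = x + ((A⁺-A)/A⁺)(z - x) (when A⁺ > 0), x⁺ = prox_{λg}(y - λ∇f(y)), v = (y - λ∇f(y) - x⁺)/λ ∈ ∂g(x⁺), and z⁺ = z - (A⁺-A)(v + ∇f(y)). Then A⁺(F(x⁺) - F(x_⋆)) + ½‖z⁺ - x_⋆‖² ≤ A(F(x) - F(x_⋆)) + ½‖z - x_⋆‖². -/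

import Mathlib

open RealInnerProductSpace

/-- `x` is the proximal point of `g` with step `lam` at `z`. -/
def IsProx {d : ℕ} (g : EuclideanSpace ℝ (Fin d) → ℝ) (lam : ℝ)
    (z x : EuclideanSpace ℝ (Fin d)) : Prop :=
  ∀ u, lam * g x + ‖x - z‖ ^ 2 / 2 ≤ lam * g u + ‖u - z‖ ^ 2 / 2

variable {d : ℕ}

lemma convex_grad_ineq (f : EuclideanSpace ℝ (Fin d) → ℝ)
    (hfconv : ConvexOn ℝ Set.univ f) (p g : EuclideanSpace ℝ (Fin d))
    (h : HasGradientAt f g p) (u : EuclideanSpace ℝ (Fin d)) :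
    f p + ⟪g, u - p⟫ ≤ f u := by
  set φ : ℝ → ℝ := fun t => f (p + t • (u - p)) with hφ
  have hline : ∀ t : ℝ, HasDerivAt (fun t : ℝ => p + t • (u - p)) (u - p) t := by
    intro t
    simpa using ((hasDerivAt_id t).smul_const (u - p)).const_add p
  have hder : HasDerivAt φ ⟪g, u - p⟫ 0 := by
    have := HasFDerivAt.comp_hasDerivAt 0 (by simpa using h.hasFDerivAt) (hline 0)
    simp at this; exact this
  have hslope : Filter.Tendsto (slope φ 0) (nhdsWithin 0 (Set.Ioi 0)) (nhds ⟪g, u - p⟫) :=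
    ((hasDerivAt_iff_tendsto_slope.mp hder).mono_left
      (nhdsWithin_mono 0 (by intro t ht; exact ne_of_gt ht)))
  have hbound : ∀ᶠ t in nhdsWithin (0:ℝ) (Set.Ioi 0), slope φ 0 t ≤ f u - f p := by
    filter_upwards [Ioc_mem_nhdsGT_of_mem (by norm_num : (0:ℝ) ∈ Set.Ico (0:ℝ) 1)] with t ht
    have ht0 : (0:ℝ) < t := ht.1
    have ht1 : t ≤ 1 := ht.2
    have hcx := hfconv.2 (Set.mem_univ p) (Set.mem_univ u)
      (by linarith : (0:ℝ) ≤ 1 - t) (le_of_lt ht0) (by ring)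
    have heq : p + t • (u - p) = (1 - t) • p + t • u := by module
    rw [slope_def_field]
    have : φ t ≤ (1 - t) * f p + t * f u := by rw [hφ]; simp only; rw [heq]; exact hcx
    have hφ0 : φ 0 = f p := by simp [hφ]
    rw [sub_zero, div_le_iff₀ ht0]
    nlinarith [this, hφ0]
  have := le_of_tendsto hslope hbound
  linarith

lemma descent_lemma (L : ℝ) (hL : 0 < L) (f : EuclideanSpace ℝ (Fin d) → ℝ)
    (f' : EuclideanSpace ℝ (Fin d) → EuclideanSpace ℝ (Fin d))
    (hdiff : ∀ u, HasGradientAt f (f' u) u)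
    (hlip : ∀ u w, ‖f' u - f' w‖ ≤ L * ‖u - w‖)
    (a b : EuclideanSpace ℝ (Fin d)) :
    f b ≤ f a + ⟪f' a, b - a⟫ + L / 2 * ‖b - a‖ ^ 2 := by
  set c := b - a with hc
  set φ : ℝ → ℝ := fun t => f (a + t • c) with hφ
  have hline : ∀ t : ℝ, HasDerivAt (fun t : ℝ => a + t • c) c t := by
    intro t
    simpa using ((hasDerivAt_id t).smul_const c).const_add a
  have hder : ∀ t : ℝ, HasDerivAt φ ⟪f' (a + t • c), c⟫ t := by
    intro t
    have := (hdiff (a + t • c)).hasFDerivAt.comp_hasDerivAt t (hline t)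
    simp at this; exact this
  have hcontf' : Continuous f' := by
    have : LipschitzWith (Real.toNNReal L) f' := by
      apply LipschitzWith.of_dist_le_mul
      intro u w
      simpa [dist_eq_norm, Real.coe_toNNReal L hL.le] using hlip u w
    exact this.continuous
  have hcont : Continuous (fun t : ℝ => ⟪f' (a + t • c), c⟫) := by
    exact (hcontf'.comp (by continuity)).inner continuous_const
  have hint : f b - f a = ∫ t in (0:ℝ)..1, ⟪f' (a + t • c), c⟫ := by
    have := intervalIntegral.integral_eq_sub_of_hasDerivAt
      (fun t _ => hder t) (hcont.intervalIntegrable 0 1)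
    rw [this]; simp [hφ, hc]
  have hi2 : IntervalIntegrable (fun t : ℝ => ⟪f' a, c⟫ + t * (L * ‖c‖ ^ 2))
      MeasureTheory.volume 0 1 :=
    (continuous_const.add (continuous_id'.mul continuous_const)).intervalIntegrable 0 1
  have hi3 : IntervalIntegrable (fun t : ℝ => t * (L * ‖c‖ ^ 2))
      MeasureTheory.volume 0 1 :=
    (continuous_id'.mul continuous_const).intervalIntegrable 0 1
  have hmono : (∫ t in (0:ℝ)..1, ⟪f' (a + t • c), c⟫)
      ≤ ∫ t in (0:ℝ)..1, (⟪f' a, c⟫ + t * (L * ‖c‖ ^ 2)) := by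
    apply intervalIntegral.integral_mono_on (by norm_num)
      (hcont.intervalIntegrable 0 1) hi2
    intro t ht
    have h1 : ⟪f' (a + t • c), c⟫ - ⟪f' a, c⟫ = ⟪f' (a + t • c) - f' a, c⟫ := by
      rw [inner_sub_left]
    have h2 : ⟪f' (a + t • c) - f' a, c⟫ ≤ ‖f' (a + t • c) - f' a‖ * ‖c‖ :=
      real_inner_le_norm _ _
    have h3 : ‖f' (a + t • c) - f' a‖ ≤ L * ‖t • c‖ := by simpa using hlip (a + t • c) a
    have h4 : ‖t • c‖ = t * ‖c‖ := by
      rw [norm_smul, Real.norm_eq_abs, abs_of_nonneg ht.1]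
    have h5 : ‖f' (a + t • c) - f' a‖ * ‖c‖ ≤ L * (t * ‖c‖) * ‖c‖ :=
      mul_le_mul_of_nonneg_right (h4 ▸ h3) (norm_nonneg c)
    have hsq : ‖c‖ ^ 2 = ‖c‖ * ‖c‖ := sq ‖c‖
    nlinarith [h1, h2, h5, hsq]
  have hval : (∫ t in (0:ℝ)..1, (⟪f' a, c⟫ + t * (L * ‖c‖ ^ 2)))
      = ⟪f' a, c⟫ + L / 2 * ‖c‖ ^ 2 := by
    have hi1 : IntervalIntegrable (fun _ : ℝ => (⟪f' a, c⟫ : ℝ)) MeasureTheory.volume 0 1 :=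
      intervalIntegrable_const
    rw [intervalIntegral.integral_add hi1 hi3, intervalIntegral.integral_const,
      intervalIntegral.integral_mul_const, integral_id]
    norm_num
    ring
  linarith [hint, hmono, hval.le, hval.ge]


set_option maxHeartbeats 1000000 in
/-- Proximal gradient potential decrease (exact proximal computations, μ = 0):
one step of the accelerated forward-backward method with step size `λ ≤ 1/L`
does not increase the potential `A (F(·) - F_⋆) + ½‖· - x_⋆‖²`. -/
theorem proximal_gradient_potential_decrease {d : ℕ} (L : ℝ) (hL : 0 < L)
    (f : EuclideanSpace ℝ (Fin d) → ℝ)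
    (f' : EuclideanSpace ℝ (Fin d) → EuclideanSpace ℝ (Fin d))
    (hfconv : ConvexOn ℝ Set.univ f)
    (hdiff : ∀ u, HasGradientAt f (f' u) u)
    (hlip : ∀ u w, ‖f' u - f' w‖ ≤ L * ‖u - w‖)
    (g : EuclideanSpace ℝ (Fin d) → ℝ)
    (hgconv : ConvexOn ℝ Set.univ g) (hglsc : LowerSemicontinuous g)
    (xstar : EuclideanSpace ℝ (Fin d)) (hmin : ∀ u, f xstar + g xstar ≤ f u + g u)
    (lam : ℝ) (hlam0 : 0 < lam) (hlamL : lam ≤ 1 / L)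
    (A Ap : ℝ) (hA : 0 ≤ A)
    (hAp : Ap = A + (lam + Real.sqrt (lam ^ 2 + 4 * lam * A)) / 2)
    (x z y xp v zp : EuclideanSpace ℝ (Fin d))
    (hy : y = x + ((Ap - A) / Ap) • (z - x))
    (hxp : IsProx g lam (y - lam • f' y) xp)
    (hv : v = lam⁻¹ • (y - lam • f' y - xp))
    (hsub : ∀ u, g xp + ⟪v, u - xp⟫ ≤ g u)
    (hzp : zp = z - (Ap - A) • (v + f' y)) :
    Ap * ((f xp + g xp) - (f xstar + g xstar)) + ‖zp - xstar‖ ^ 2 / 2 ≤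
      A * ((f x + g x) - (f xstar + g xstar)) + ‖z - xstar‖ ^ 2 / 2 := by

  -- basic scalar facts about Ap
  have hs0 : 0 ≤ lam ^ 2 + 4 * lam * A := by positivity
  set s := Real.sqrt (lam ^ 2 + 4 * lam * A) with hsdef
  have hs2 : s ^ 2 = lam ^ 2 + 4 * lam * A := Real.sq_sqrt hs0
  have hslam : lam ≤ s := by
    nlinarith [Real.sqrt_nonneg (lam ^ 2 + 4 * lam * A), hs2]
  have htau : Ap - A = (lam + s) / 2 := by rw [hAp]; ring
  have htauL : 0 < Ap - A := by rw [htau]; linarith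
  have hAp0 : 0 < Ap := by linarith
  have hkey : (Ap - A) ^ 2 = lam * Ap := by
    rw [htau]; nlinarith [hs2]
  -- vector identities
  set w : EuclideanSpace ℝ (Fin d) := v + f' y with hw
  have hxpw : xp = y - lam • w := by
    rw [hw, hv]
    rw [smul_add, smul_smul, mul_inv_cancel₀ (ne_of_gt hlam0), one_smul]
    module
  have hAy : Ap • y = A • x + (Ap - A) • z := by
    rw [hy, smul_add, smul_smul, mul_div_cancel₀ _ (ne_of_gt hAp0)]
    module
  -- the key per-point inequality
  have hkeyineq : ∀ u, f xp + g xp ≤ (f u + g u) + ⟪w, xp - u⟫ + lam / 2 * ‖w‖ ^ 2 := by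
    intro u
    have hLlam : L * lam ≤ 1 := by
      calc L * lam ≤ L * (1 / L) := mul_le_mul_of_nonneg_left hlamL hL.le
        _ = 1 := by field_simp
    have hdesc := descent_lemma L hL f f' hdiff hlip y xp
    have hxpmy : xp - y = -(lam • w) := by rw [hxpw]; module
    have hnorm : ‖xp - y‖ ^ 2 = lam ^ 2 * ‖w‖ ^ 2 := by
      rw [hxpmy, norm_neg, norm_smul, Real.norm_eq_abs, abs_of_pos hlam0, mul_pow]
    have hinner : ⟪f' y, xp - y⟫ = -(lam * ⟪f' y, w⟫) := by
      rw [hxpmy, inner_neg_right, real_inner_smul_right]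
    have hdesc2 : f xp ≤ f y - lam * ⟪f' y, w⟫ + lam / 2 * ‖w‖ ^ 2 := by
      have h1 : L / 2 * ‖xp - y‖ ^ 2 ≤ 1 / (2 * lam) * ‖xp - y‖ ^ 2 := by
        apply mul_le_mul_of_nonneg_right _ (sq_nonneg _)
        rw [div_le_div_iff₀ (by norm_num) (by positivity)]
        linarith
      have h2 : 1 / (2 * lam) * ‖xp - y‖ ^ 2 = lam / 2 * ‖w‖ ^ 2 := by
        rw [hnorm]; field_simp
      linarith [hdesc, hinner.le, hinner.ge]
    have hfconvy : f y + ⟪f' y, u - y⟫ ≤ f u :=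
      convex_grad_ineq f hfconv y (f' y) (hdiff y) u
    have hgsub : g xp + ⟪v, u - xp⟫ ≤ g u := hsub u
    have hinner2 : ⟪f' y, u - y⟫ = -⟪f' y, y - u⟫ := by
      rw [← inner_neg_right]; congr 1; module
    have hinner3 : ⟪f' y, y - u⟫ - lam * ⟪f' y, w⟫ + ⟪v, xp - u⟫ = ⟪w, xp - u⟫ := by
      have e1 : ⟪f' y, y - u⟫ - lam * ⟪f' y, w⟫ = ⟪f' y, xp - u⟫ := by
        rw [← real_inner_smul_right, ← inner_sub_right]
        congr 1
        rw [hxpw]; module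
      rw [e1, hw, ← inner_add_left]
      congr 1
      module
    have hvxpu : ⟪v, u - xp⟫ = -⟪v, xp - u⟫ := by
      rw [← inner_neg_right]; congr 1; module
    linarith [hdesc2, hfconvy, hgsub, hinner2.le, hinner2.ge, hinner3.le, hinner3.ge,
      hvxpu.le, hvxpu.ge]
  -- apply at xstar and x
  have hKs := hkeyineq xstar
  have hKx := hkeyineq x
  -- inner product identity
  have hvec : (Ap - A) • (xp - xstar) + A • (xp - x)
      = (Ap - A) • (z - xstar) - (lam * Ap) • w := by
    have : Ap • xp = A • x + (Ap - A) • z - (lam * Ap) • w := by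
      rw [hxpw, smul_sub, hAy, smul_smul, mul_comm Ap lam]
    rw [smul_sub, smul_sub, smul_sub]
    have e : (Ap - A) • xp + A • xp = Ap • xp := by module
    calc (Ap - A) • xp - (Ap - A) • xstar + (A • xp - A • x)
        = ((Ap - A) • xp + A • xp) - (Ap - A) • xstar - A • x := by module
      _ = Ap • xp - (Ap - A) • xstar - A • x := by rw [e]
      _ = (A • x + (Ap - A) • z - (lam * Ap) • w) - (Ap - A) • xstar - A • x := by rw [this]
      _ = ((Ap - A) • z - (Ap - A) • xstar) - (lam * Ap) • w := by module
  have hip : (Ap - A) * ⟪w, xp - xstar⟫ + A * ⟪w, xp - x⟫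
      = (Ap - A) * ⟪w, z - xstar⟫ - lam * Ap * ‖w‖ ^ 2 := by
    have := congrArg (fun q => ⟪w, q⟫) hvec
    simp only [inner_add_right, inner_sub_right, real_inner_smul_right,
      real_inner_self_eq_norm_sq] at this
    simp only [inner_sub_right]
    linarith [this.le, this.ge]
  -- norm expansion
  have hznorm : ‖zp - xstar‖ ^ 2
      = ‖z - xstar‖ ^ 2 - 2 * ((Ap - A) * ⟪w, z - xstar⟫) + (Ap - A) ^ 2 * ‖w‖ ^ 2 := by
    have hzpv : zp - xstar = (z - xstar) - (Ap - A) • w := by rw [hzp, hw]; module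
    rw [hzpv, @norm_sub_sq_real]
    rw [real_inner_smul_right, norm_smul, Real.norm_eq_abs, abs_of_pos htauL, mul_pow,
      real_inner_comm]
    try ring
  -- combine
  have hKs' : (Ap - A) * (f xp + g xp) ≤ (Ap - A) * ((f xstar + g xstar)
      + ⟪w, xp - xstar⟫ + lam / 2 * ‖w‖ ^ 2) :=
    mul_le_mul_of_nonneg_left hKs htauL.le
  have hKx' : A * (f xp + g xp) ≤ A * ((f x + g x) + ⟪w, xp - x⟫ + lam / 2 * ‖w‖ ^ 2) :=
    mul_le_mul_of_nonneg_left hKx hA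
  nlinarith [hKs', hKx', hip, hznorm, hkey, sq_nonneg ‖w‖]
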